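/- arXiv:1702.03093 — 3 statements merged into one kernel-verified Lean document; each statement's English description precedes it below -/
import Mathlib

section
/- Fix a subset τ ⊆ Δ of the simple roots. Define the point e_τ ∈ Hom_Mon(⟨Φ⁻⟩, ℝ_{≥0}) by e_τ(α) = 1 for α in the sub-root-system Φ(L)⁻ = (span_ℤ τ ∩ Φ)⁻ and e_τ(α) = 0 for α ∈ Φ⁻ \ Φ(L)⁻. Then e_τ is a well-defined monoid homomorphism from ⟨Φ⁻⟩ to (ℝ_{≥0}, ×): i.e., the assignment extends consistently to all of ⟨Φ⁻⟩. -/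
open scoped NNReal Pointwise

/-! Write elements of `⟨Φ⁻⟩` as `-Σ n_δ δ` with `n_δ ≥ 0` in the linearly independent family `Δ`.
If `a + b` lies in the span of `τ ⊆ Δ`, comparing coefficients shows that every `δ` occurring in
`a` or `b` lies in `τ`, so `a` and `b` lie in the span of `τ` too. Hence `{χ ∈ ⟨Φ⁻⟩ | e_τ χ = 1}`
is a face of the monoid, and the indicator function `e_τ` of that face is multiplicative. -/

section

variable {X : Type*} [AddCommGroup X] {Δ τ : Set X}

theorem AddSubmonoid.exists_linearCombination_natCast_eq_of_mem_closure {a : X}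
    (ha : a ∈ AddSubmonoid.closure Δ) :
    ∃ f : Δ →₀ ℕ,
      Finsupp.linearCombination ℤ Subtype.val (f.mapRange Nat.cast Nat.cast_zero) = a := by
  rw [← Subtype.range_coe (s := Δ), AddSubmonoid.mem_closure_range_iff] at ha
  obtain ⟨f, rfl⟩ := ha
  refine ⟨f, ?_⟩
  simp [Finsupp.linearCombination_apply, Finsupp.sum_mapRange_index]

theorem LinearIndependent.left_mem_closure_of_add_mem_closure
    (hind : LinearIndependent ℤ (fun a : Δ => (a : X))) (hτ : τ ⊆ Δ) {a b : X}
    (ha : a ∈ AddSubmonoid.closure Δ) (hb : b ∈ AddSubmonoid.closure Δ)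
    (hab : a + b ∈ AddSubgroup.closure τ) : a ∈ AddSubgroup.closure τ := by
  have hτ_eq : τ = Subtype.val '' {δ : Δ | δ.1 ∈ τ} := by
    simpa [Set.image, Set.ext_iff] using fun x hx => hτ hx
  rw [← Submodule.span_int_eq_addSubgroupClosure, Submodule.mem_toAddSubgroup, hτ_eq,
    Finsupp.mem_span_image_iff_linearCombination] at hab ⊢
  obtain ⟨f, rfl⟩ := AddSubmonoid.exists_linearCombination_natCast_eq_of_mem_closure ha
  obtain ⟨g, rfl⟩ := AddSubmonoid.exists_linearCombination_natCast_eq_of_mem_closure hb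
  obtain ⟨c, hc, hc_eq⟩ := hab
  rw [← map_add] at hc_eq
  have hc_coeff := hind hc_eq
  refine ⟨_, fun i hi => ?_, rfl⟩
  by_contra hiτ
  have hci := DFunLike.congr_fun hc_coeff i
  rw [Finsupp.notMem_support_iff.mp (fun h => hiτ (hc h))] at hci
  simp only [Finsupp.coe_add, Pi.add_apply, Finsupp.mapRange_apply] at hci
  simp only [Finset.mem_coe, Finsupp.mem_support_iff, Finsupp.mapRange_apply] at hi
  omega

theorem LinearIndependent.mem_closure_of_add_mem_closure_neg
    (hind : LinearIndependent ℤ (fun a : Δ => (a : X))) (hτ : τ ⊆ Δ) {a b : X}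
    (ha : a ∈ AddSubmonoid.closure ((fun a => -a) '' Δ))
    (hb : b ∈ AddSubmonoid.closure ((fun a => -a) '' Δ))
    (hab : a + b ∈ AddSubgroup.closure τ) :
    a ∈ AddSubgroup.closure τ ∧ b ∈ AddSubgroup.closure τ := by
  rw [Set.image_neg_eq_neg, AddSubmonoid.mem_closure_neg] at ha hb
  rw [← neg_mem_iff, neg_add] at hab
  exact ⟨neg_mem_iff.mp (hind.left_mem_closure_of_add_mem_closure hτ ha hb hab),
    neg_mem_iff.mp
      (hind.left_mem_closure_of_add_mem_closure hτ hb ha (add_comm (-a) (-b) ▸ hab))⟩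

end

/-- for a subset τ of the simple roots Δ, the point `e_τ`, defined by
`e_τ(χ) = 1` if χ lies in the ℤ-span of τ and `e_τ(χ) = 0` otherwise, is a well-defined
monoid homomorphism from `⟨Φ⁻⟩` to `(ℝ_{≥0}, ×)`: it sends 0 to 1, is multiplicative on
`⟨Φ⁻⟩`, and takes the prescribed values 1 on `Φ(L)⁻ = Φ⁻ ∩ ℤ-span(τ)` and 0 on
`Φ⁻ \ Φ(L)⁻`. -/
theorem stmt6 (X : Type*) [AddCommGroup X]
    (Δ : Set X) (hind : LinearIndependent ℤ (fun a : Δ => (a : X)))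
    (τ : Set X) (hτ : τ ⊆ Δ)
    (Φminus : Set X)
    (hΦ : Φminus ⊆ (AddSubmonoid.closure ((fun a => -a) '' Δ) : Set X))
    (M : AddSubmonoid X) (hM : M = AddSubmonoid.closure Φminus)
    (e : X → ℝ≥0)
    (he1 : ∀ χ ∈ AddSubgroup.closure τ, e χ = 1)
    (he0 : ∀ χ ∉ AddSubgroup.closure τ, e χ = 0) :
    e 0 = 1 ∧
    (∀ a ∈ M, ∀ b ∈ M, e (a + b) = e a * e b) ∧
    (∀ α ∈ Φminus, α ∈ AddSubgroup.closure τ → e α = 1) ∧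
    (∀ α ∈ Φminus, α ∉ AddSubgroup.closure τ → e α = 0) := by
  refine ⟨he1 0 (zero_mem _), fun a ha b hb => ?_, fun α _ => he1 α, fun α _ => he0 α⟩
  have hM_le : M ≤ AddSubmonoid.closure ((fun a => -a) '' Δ) :=
    hM ▸ AddSubmonoid.closure_le.mpr hΦ
  by_cases hab : a + b ∈ AddSubgroup.closure τ
  · obtain ⟨haτ, hbτ⟩ := hind.mem_closure_of_add_mem_closure_neg hτ (hM_le ha) (hM_le hb) hab
    rw [he1 _ hab, he1 _ haτ, he1 _ hbτ, mul_one]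
  · rw [he0 _ hab]
    by_cases haτ : a ∈ AddSubgroup.closure τ
    · rw [he0 b fun hbτ => hab (add_mem haτ hbτ), mul_zero]
    · rw [he0 a haτ, zero_mul]
end

section
/- For τ ⊆ Δ, the stratum Z(τ) := { z ∈ Hom_Mon(⟨Φ⁻⟩, ℝ_{≥0}) : z(α) = 0 for all α ∈ Φ⁻ \ Φ(L)⁻ and z(α) ≠ 0 for all α ∈ Φ(L)⁻ } is stable under the natural action of Λ = Hom_Ab(X*(T), ℝ_{>0}) by pointwise multiplication, and the stabilizer of each point of Z(τ) is Λ(τ) := { x ∈ Λ : x(α) = 1 for all α ∈ Φ(L) }, so that Z(τ) is a torsor under Λ/Λ(τ), trivialized by the point e_τ. -/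
/-!
A point `z ∈ Z(τ)` is nonzero exactly on the submonoid `⟨Φ(L)⁻⟩` of `⟨Φ⁻⟩`, where it is
multiplicative with values in `ℝ_{>0}`. Hence two points `z, z'` differ by the character `z'/z`
of `⟨Φ(L)⁻⟩`, which extends to all of `X` because `ℝ_{>0} ≅ ℝ` is divisible; and `x ∈ Λ` fixes `z`
iff `x` is trivial on `⟨Φ(L)⁻⟩`, i.e. on `Φ(L)`. The point `e_τ` is multiplicative on `⟨Φ⁻⟩` because
the coordinates of elements of `⟨-Δ⟩` in the basis `Δ` are `≤ 0`, so a sum of two of them lies in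
`ℤτ` only if both summands do.
-/

open scoped NNReal

section
variable {X : Type*} [AddCommGroup X]

/-- An element of `Λ = Hom_Ab(X*(T), ℝ_{>0})`: a group homomorphism into the
positive reals, modelled as a multiplicative nowhere-vanishing `ℝ≥0`-valued function. -/
def IsLamHom (x : X → ℝ≥0) : Prop :=
  (∀ a b, x (a + b) = x a * x b) ∧ ∀ a, x a ≠ 0

/-- An element of `Λ̄ = Hom_Mon(⟨Φ⁻⟩, ℝ_{≥0})`: a function which is a monoid
homomorphism on the submonoid `M = ⟨Φ⁻⟩`. -/
def IsLamBarHom (M : AddSubmonoid X) (z : X → ℝ≥0) : Prop :=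
  z 0 = 1 ∧ ∀ a ∈ M, ∀ b ∈ M, z (a + b) = z a * z b

/-- Membership in the stratum `Z(τ)`: a monoid homomorphism on `M = ⟨Φ⁻⟩` which is
nonzero exactly on the negative roots lying in the ℤ-span of τ (i.e. on `Φ(L)⁻`),
and zero on `Φ⁻ \ Φ(L)⁻`. -/
def MemZ (M : AddSubmonoid X) (Φminus : Set X) (τ : Set X) (z : X → ℝ≥0) : Prop :=
  IsLamBarHom M z ∧ ∀ α ∈ Φminus, (z α ≠ 0 ↔ α ∈ AddSubgroup.closure τ)

end

open Algebra Finsupp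

namespace Algebra.GrothendieckAddGroup

theorem lift_of {M G : Type*} [AddCommMonoid M] [AddCommGroup G] (f : M →+ G) (a : M) :
    lift f (of a) = f a :=
  DFunLike.congr_fun (lift.symm_apply_apply f) a

theorem lift_subtype_injective {X : Type*} [AddCommGroup X] (N : AddSubmonoid X) :
    Function.Injective (lift N.subtype) := by
  rw [injective_iff_map_eq_zero]
  intro x hx
  induction x using AddLocalization.induction_on with
  | H y =>
    rw [AddLocalization.mk_eq_addMonoidOf_mk'_apply] at hx
    unfold lift at hx
    simp only [Equiv.coe_fn_mk, AddSubmonoid.LocalizationMap.lift_mk'] at hx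
    rw [← AddLocalization.mk_zero, AddLocalization.mk_eq_mk_iff']
    simp only [AddSubmonoid.subtype_apply, AddUnits.val_neg_eq_neg_val, ZeroMemClass.coe_zero,
      zero_add, add_zero] at hx ⊢
    exact Subtype.ext (add_neg_eq_zero.mp hx)

end Algebra.GrothendieckAddGroup

theorem AddSubmonoid.exists_addMonoidHom_extend {X Q : Type*} [AddCommGroup X] [AddCommGroup Q]
    (hQ : Module.Baer ℤ Q) (N : AddSubmonoid X) (f : N →+ Q) :
    ∃ g : X →+ Q, ∀ a : N, g a = f a := by
  obtain ⟨g, hg⟩ := hQ.extension_property_addMonoidHom _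
    (GrothendieckAddGroup.lift_subtype_injective N) (GrothendieckAddGroup.lift f)
  refine ⟨g, fun a => ?_⟩
  simpa only [AddMonoidHom.comp_apply, GrothendieckAddGroup.lift_of, AddSubmonoid.coe_subtype]
    using DFunLike.congr_fun hg (GrothendieckAddGroup.of a)

section Coordinates

variable {X : Type*} [AddCommGroup X] {Δ τ : Set X}

theorem exists_nonpos_linearCombination_of_mem_closure_neg {a : X}
    (ha : a ∈ AddSubmonoid.closure ((fun a => -a) '' Δ)) :
    ∃ l : Δ →₀ ℤ, (∀ d, l d ≤ 0) ∧ linearCombination ℤ (↑) l = a := by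
  induction ha using AddSubmonoid.closure_induction with
  | mem _ h =>
    obtain ⟨d, hd, rfl⟩ := h
    exact ⟨-single ⟨d, hd⟩ 1, fun c => neg_nonpos.mpr (single_nonneg.mpr zero_le_one c), by simp⟩
  | zero => exact ⟨0, fun _ => le_rfl, map_zero _⟩
  | add _ _ _ _ iha ihb =>
    obtain ⟨la, hla, rfl⟩ := iha
    obtain ⟨lb, hlb, rfl⟩ := ihb
    exact ⟨la + lb, fun d => add_nonpos (hla d) (hlb d), map_add _ _ _⟩

theorem mem_addSubgroupClosure_iff_linearCombination (hτ : τ ⊆ Δ) {b : X} :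
    b ∈ AddSubgroup.closure τ ↔
      ∃ l : Δ →₀ ℤ, (∀ d : Δ, (d : X) ∉ τ → l d = 0) ∧ linearCombination ℤ (↑) l = b := by
  calc b ∈ AddSubgroup.closure τ ↔ b ∈ Submodule.span ℤ (((↑) : Δ → X) '' ((↑) ⁻¹' τ)) := by
        rw [Subtype.image_preimage_coe, Set.inter_eq_right.mpr hτ,
          ← Submodule.span_int_eq_addSubgroupClosure, Submodule.mem_toAddSubgroup]
    _ ↔ _ := by
        rw [mem_span_image_iff_linearCombination]
        simp only [mem_supported', Set.mem_preimage]

/-- Coordinates in the basis `Δ` of elements of `⟨-Δ⟩` are `≤ 0`, so two of them can only sum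
into the span of `τ ⊆ Δ` if each of them lies in it. -/
theorem mem_addSubgroupClosure_of_add_mem (hind : LinearIndependent ℤ (fun a : Δ => (a : X)))
    (hτ : τ ⊆ Δ) {a b : X} (ha : a ∈ AddSubmonoid.closure ((fun a => -a) '' Δ))
    (hb : b ∈ AddSubmonoid.closure ((fun a => -a) '' Δ)) (hab : a + b ∈ AddSubgroup.closure τ) :
    a ∈ AddSubgroup.closure τ := by
  obtain ⟨la, hla, rfl⟩ := exists_nonpos_linearCombination_of_mem_closure_neg ha
  obtain ⟨lb, hlb, rfl⟩ := exists_nonpos_linearCombination_of_mem_closure_neg hb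
  obtain ⟨l, hl, hl_eq⟩ := (mem_addSubgroupClosure_iff_linearCombination hτ).mp hab
  have hsum : l = la + lb := hind (by rw [hl_eq, map_add])
  refine (mem_addSubgroupClosure_iff_linearCombination hτ).mpr ⟨la, fun d hd => ?_, rfl⟩
  have := hl d hd
  rw [hsum, Finsupp.add_apply] at this
  linarith [hla d, hlb d]

end Coordinates

section Stratum

variable {X : Type*} [AddCommGroup X] {M : AddSubmonoid X} {Φminus τ : Set X}
  {x z z' : X → ℝ≥0}

theorem IsLamHom.map_zero (hx : IsLamHom x) : x 0 = 1 :=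
  (mul_left_cancel₀ (hx.2 0) (by rw [← hx.1, add_zero, mul_one])).symm

theorem IsLamHom.apply_neg_mul_apply (hx : IsLamHom x) (a : X) : x (-a) * x a = 1 := by
  rw [← hx.1, neg_add_cancel, hx.map_zero]

theorem IsLamHom.eq_one_of_mem_closure {s : Set X} (hx : IsLamHom x) (hs : ∀ α ∈ s, x α = 1)
    {χ : X} (hχ : χ ∈ AddSubmonoid.closure s) : x χ = 1 := by
  induction hχ using AddSubmonoid.closure_induction with
  | mem α hα => exact hs α hα
  | zero => exact hx.map_zero
  | add a b _ _ iha ihb => rw [hx.1, iha, ihb, mul_one]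

theorem IsLamHom.forall_image_neg_union_inter_eq_one_iff (hx : IsLamHom x) (H : AddSubgroup X) :
    (∀ α ∈ ((fun a => -a) '' Φminus ∪ Φminus) ∩ (H : Set X), x α = 1) ↔
      ∀ α ∈ Φminus ∩ (H : Set X), x α = 1 := by
  refine ⟨fun h α hα => h α ⟨Or.inr hα.1, hα.2⟩, fun h α ⟨hα, hαH⟩ => ?_⟩
  rcases hα with ⟨β, hβ, rfl⟩ | hα
  · simpa [h β ⟨hβ, by simpa using neg_mem hαH⟩] using hx.apply_neg_mul_apply β
  · exact h α ⟨hα, hαH⟩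

/-- The monoid `⟨Φ(L)⁻⟩` of the paper. -/
def negLeviSubmonoid (Φminus τ : Set X) : AddSubmonoid X :=
  AddSubmonoid.closure (Φminus ∩ AddSubgroup.closure τ)

theorem negLeviSubmonoid_le_closure : negLeviSubmonoid Φminus τ ≤ AddSubmonoid.closure Φminus :=
  AddSubmonoid.closure_mono Set.inter_subset_left

theorem MemZ.lamHom_mul (hz : MemZ M Φminus τ z) (hx : IsLamHom x) :
    MemZ M Φminus τ (fun χ => x χ * z χ) := by
  refine ⟨⟨show x 0 * z 0 = 1 by rw [hx.map_zero, hz.1.1, one_mul], fun a ha b hb => ?_⟩,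
    fun α hα => ?_⟩
  · show x (a + b) * z (a + b) = x a * z a * (x b * z b)
    rw [hx.1, hz.1.2 a ha b hb, mul_mul_mul_comm]
  · rw [← hz.2 α hα]
    exact ⟨right_ne_zero_of_mul, mul_ne_zero (hx.2 α)⟩

theorem MemZ.apply_ne_zero_of_mem_negLeviSubmonoid
    (hz : MemZ (AddSubmonoid.closure Φminus) Φminus τ z) {χ : X}
    (hχ : χ ∈ negLeviSubmonoid Φminus τ) : z χ ≠ 0 := by
  induction hχ using AddSubmonoid.closure_induction with
  | mem α hα => exact (hz.2 α hα.1).mpr hα.2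
  | zero => simp [hz.1.1]
  | add a b ha hb iha ihb =>
    rw [hz.1.2 a (negLeviSubmonoid_le_closure ha) b (negLeviSubmonoid_le_closure hb)]
    exact mul_ne_zero iha ihb

theorem MemZ.mem_negLeviSubmonoid_of_apply_ne_zero
    (hz : MemZ (AddSubmonoid.closure Φminus) Φminus τ z) {χ : X}
    (hχ : χ ∈ AddSubmonoid.closure Φminus) (hzχ : z χ ≠ 0) : χ ∈ negLeviSubmonoid Φminus τ := by
  induction hχ using AddSubmonoid.closure_induction with
  | mem α hα => exact AddSubmonoid.subset_closure ⟨hα, (hz.2 α hα).mp hzχ⟩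
  | zero => exact zero_mem _
  | add a b ha hb iha ihb =>
    rw [hz.1.2 a ha b hb] at hzχ
    exact add_mem (iha (left_ne_zero_of_mul hzχ)) (ihb (right_ne_zero_of_mul hzχ))

/-- Take logarithms: `ℝ` is divisible, hence an injective `ℤ`-module. -/
theorem exists_isLamHom_eqOn (N : AddSubmonoid X) (r : X → ℝ≥0) (hr0 : ∀ a ∈ N, r a ≠ 0)
    (hr : ∀ a ∈ N, ∀ b ∈ N, r (a + b) = r a * r b) :
    ∃ x, IsLamHom x ∧ ∀ a ∈ N, x a = r a := by
  have hr0' (a : N) : (r a : ℝ) ≠ 0 := NNReal.coe_ne_zero.mpr (hr0 a a.2)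
  let logr : N →+ ℝ := AddMonoidHom.mk' (fun a => Real.log (r a)) fun a b => by
    rw [AddSubmonoid.coe_add, hr a a.2 b b.2, NNReal.coe_mul, Real.log_mul (hr0' a) (hr0' b)]
  obtain ⟨g, hg⟩ := N.exists_addMonoidHom_extend (Module.Baer.of_divisible ℝ) logr
  refine ⟨fun χ => ⟨Real.exp (g χ), (Real.exp_pos _).le⟩, ⟨fun a b => ?_, fun a => ?_⟩,
    fun a ha => ?_⟩
  · ext
    exact (congrArg Real.exp (map_add g a b)).trans (Real.exp_add _ _)
  · exact ne_of_gt (Real.exp_pos _)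
  · ext
    simp only [hg ⟨a, ha⟩, logr, AddMonoidHom.mk'_apply]
    exact Real.exp_log ((NNReal.coe_pos.mpr (pos_iff_ne_zero.mpr (hr0 a ha))))

theorem MemZ.exists_isLamHom_mul_eq (hz : MemZ (AddSubmonoid.closure Φminus) Φminus τ z)
    (hz' : MemZ (AddSubmonoid.closure Φminus) Φminus τ z') :
    ∃ x, IsLamHom x ∧ ∀ χ ∈ AddSubmonoid.closure Φminus, x χ * z χ = z' χ := by
  obtain ⟨x, hx, hxN⟩ := exists_isLamHom_eqOn (negLeviSubmonoid Φminus τ) (fun χ => z' χ / z χ)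
    (fun a ha => div_ne_zero (hz'.apply_ne_zero_of_mem_negLeviSubmonoid ha)
      (hz.apply_ne_zero_of_mem_negLeviSubmonoid ha))
    (fun a ha b hb => by
      rw [hz.1.2 a (negLeviSubmonoid_le_closure ha) b (negLeviSubmonoid_le_closure hb),
        hz'.1.2 a (negLeviSubmonoid_le_closure ha) b (negLeviSubmonoid_le_closure hb),
        mul_div_mul_comm])
  refine ⟨x, hx, fun χ hχ => ?_⟩
  by_cases hzχ : z χ = 0
  · have hz'χ : z' χ = 0 := by
      by_contra h
      exact hz.apply_ne_zero_of_mem_negLeviSubmonoid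
        (hz'.mem_negLeviSubmonoid_of_apply_ne_zero hχ h) hzχ
    rw [hzχ, hz'χ, mul_zero]
  · rw [hxN χ (hz.mem_negLeviSubmonoid_of_apply_ne_zero hχ hzχ), div_mul_cancel₀ _ hzχ]

theorem MemZ.lamHom_mul_eq_self_iff (hz : MemZ (AddSubmonoid.closure Φminus) Φminus τ z)
    (hx : IsLamHom x) :
    (∀ χ ∈ AddSubmonoid.closure Φminus, x χ * z χ = z χ) ↔
      ∀ α ∈ Φminus ∩ (AddSubgroup.closure τ : Set X), x α = 1 := by
  refine ⟨fun h α hα => ?_, fun h χ hχ => ?_⟩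
  · refine mul_right_cancel₀ ((hz.2 α hα.1).mpr hα.2) ?_
    rw [h α (AddSubmonoid.subset_closure hα.1), one_mul]
  · by_cases hzχ : z χ = 0
    · rw [hzχ, mul_zero]
    · rw [hx.eq_one_of_mem_closure h (hz.mem_negLeviSubmonoid_of_apply_ne_zero hχ hzχ), one_mul]

theorem memZ_of_indicator (Δ : Set X) (hind : LinearIndependent ℤ (fun a : Δ => (a : X)))
    (hτ : τ ⊆ Δ) (hΦ : Φminus ⊆ (AddSubmonoid.closure ((fun a => -a) '' Δ) : Set X))
    (e : X → ℝ≥0) (he1 : ∀ χ ∈ AddSubgroup.closure τ, e χ = 1)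
    (he0 : ∀ χ ∉ AddSubgroup.closure τ, e χ = 0) :
    MemZ (AddSubmonoid.closure Φminus) Φminus τ e := by
  have hΦ' := AddSubmonoid.closure_le.mpr hΦ
  refine ⟨⟨he1 0 (zero_mem _), fun a ha b hb => ?_⟩, fun α _ => ?_⟩
  · by_cases haτ : a ∈ AddSubgroup.closure τ
    · by_cases hbτ : b ∈ AddSubgroup.closure τ
      · rw [he1 a haτ, he1 b hbτ, he1 _ (add_mem haτ hbτ), mul_one]
      · rw [he0 b hbτ, mul_zero, he0]
        intro hab
        exact hbτ (mem_addSubgroupClosure_of_add_mem hind hτ (hΦ' hb) (hΦ' ha)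
          (by rwa [add_comm]))
    · rw [he0 a haτ, zero_mul, he0]
      exact fun hab => haτ (mem_addSubgroupClosure_of_add_mem hind hτ (hΦ' ha) (hΦ' hb) hab)
  · by_cases hατ : α ∈ AddSubgroup.closure τ
    · simp [he1 α hατ, hατ]
    · simp [he0 α hατ, hατ]

end Stratum

theorem stmt8_general (X : Type*) [AddCommGroup X]
    (Δ : Set X) (hind : LinearIndependent ℤ (fun a : Δ => (a : X)))
    (τ : Set X) (hτ : τ ⊆ Δ)
    (Φplus Φminus : Set X) (hpm : Φplus = (fun a => -a) '' Φminus)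
    (hΦ : Φminus ⊆ (AddSubmonoid.closure ((fun a => -a) '' Δ) : Set X))
    (M : AddSubmonoid X) (hM : M = AddSubmonoid.closure Φminus)
    (etau : X → ℝ≥0)
    (het1 : ∀ χ ∈ AddSubgroup.closure τ, etau χ = 1)
    (het0 : ∀ χ ∉ AddSubgroup.closure τ, etau χ = 0) :
    (∀ x z, IsLamHom x → MemZ M Φminus τ z → MemZ M Φminus τ (fun χ => x χ * z χ)) ∧
    (∀ z z', MemZ M Φminus τ z → MemZ M Φminus τ z' →
      ∃ x, IsLamHom x ∧ ∀ χ ∈ M, x χ * z χ = z' χ) ∧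
    (∀ z x, MemZ M Φminus τ z → IsLamHom x →
      ((∀ χ ∈ M, x χ * z χ = z χ) ↔
        ∀ α ∈ (Φplus ∪ Φminus) ∩ (AddSubgroup.closure τ : Set X), x α = 1)) ∧
    MemZ M Φminus τ etau := by
  subst hM hpm
  refine ⟨fun x z hx hz => hz.lamHom_mul hx, fun z z' hz hz' => hz.exists_isLamHom_mul_eq hz',
    fun z x hz hx => ?_, memZ_of_indicator Δ hind hτ hΦ etau het1 het0⟩
  rw [hz.lamHom_mul_eq_self_iff hx, hx.forall_image_neg_union_inter_eq_one_iff]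

/-- the stratum `Z(τ)` is stable under the action of
`Λ = Hom_Ab(X*(T), ℝ_{>0})` by pointwise multiplication; the action of Λ on `Z(τ)` is
transitive; the stabilizer of each point of `Z(τ)` is
`Λ(τ) = { x ∈ Λ : x(α) = 1 for all α ∈ Φ(L) }` (so `Z(τ)` is a torsor under `Λ/Λ(τ)`);
and `Z(τ)` is trivialized by the point `e_τ`. -/
theorem stmt8 (X : Type*) [AddCommGroup X]
    (Δ : Set X) (hind : LinearIndependent ℤ (fun a : Δ => (a : X)))
    (τ : Set X) (hτ : τ ⊆ Δ)
    (Φplus Φminus : Set X) (hpm : Φplus = (fun a => -a) '' Φminus)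
    (hΔΦ : (fun a => -a) '' Δ ⊆ Φminus)
    (hΦ : Φminus ⊆ (AddSubmonoid.closure ((fun a => -a) '' Δ) : Set X))
    (M : AddSubmonoid X) (hM : M = AddSubmonoid.closure Φminus)
    (etau : X → ℝ≥0)
    (het1 : ∀ χ ∈ AddSubgroup.closure τ, etau χ = 1)
    (het0 : ∀ χ ∉ AddSubgroup.closure τ, etau χ = 0) :
    (∀ x z, IsLamHom x → MemZ M Φminus τ z → MemZ M Φminus τ (fun χ => x χ * z χ)) ∧
    (∀ z z', MemZ M Φminus τ z → MemZ M Φminus τ z' →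
      ∃ x, IsLamHom x ∧ ∀ χ ∈ M, x χ * z χ = z' χ) ∧
    (∀ z x, MemZ M Φminus τ z → IsLamHom x →
      ((∀ χ ∈ M, x χ * z χ = z χ) ↔
        ∀ α ∈ (Φplus ∪ Φminus) ∩ (AddSubgroup.closure τ : Set X), x α = 1)) ∧
    MemZ M Φminus τ etau :=
  stmt8_general X Δ hind τ hτ Φplus Φminus hpm hΦ M hM etau het1 het0
end

section
/- Let τ, τ' ⊆ Δ. Then the closure relation on strata of the wonderful compactification corresponds to inclusion of types: with Z(τ) ⊆ Hom_Mon(⟨Φ⁻⟩, ℝ_{≥0}) the strata defined by z(α) ≠ 0 iff α ∈ Φ⁻ ∩ ℤ-span(τ), the topological closure of Z(τ) (in the pointwise-convergence topology) equals the union of Z(τ') over all τ' ⊆ τ. -/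
open scoped NNReal
open Set

/-!
Since `Δ` is linearly independent, the cone `M = ⟨-Δ⟩` is free on `-Δ`, so a character `z` of `M`
is determined by its values `z(-a)`, `a ∈ Δ`, and these may be prescribed arbitrarily. As `ℝ≥0`
has no zero divisors, `z` is nonzero exactly on the face of `M` generated by the `-a` with
`z(-a) ≠ 0`, and by independence that face is `M ∩ ℤ-span(σ)` only for `σ = {a | z(-a) ≠ 0}`.
So `Z(σ)` consists of the characters with `z(-a) ≠ 0` exactly for `a ∈ σ`, and the union over
`σ ⊆ τ` is the closed set `{z | z(-a) = 0 for a ∉ τ}`. Any such `z` is the limit as `u → 0⁺` of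
the characters obtained by adding `u` to its values on `τ`, which lie in `Z(τ)`.
-/

abbrev NNCharacter (N : Type*) [AddMonoid N] :=
  {z : N → ℝ≥0 // z 0 = 1 ∧ ∀ a b : N, z (a + b) = z a * z b}

namespace NNCharacter

section AddMonoid

variable {N P : Type*} [AddMonoid N] [AddMonoid P]

def supportSubmonoid (z : NNCharacter N) : AddSubmonoid N where
  carrier := {m | z.1 m ≠ 0}
  zero_mem' := by simp [z.2.1]
  add_mem' {a b} ha hb := by simpa [z.2.2] using ⟨ha, hb⟩

theorem supportSubmonoid_eq_closure {ι : Type*} {g : ι → N}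
    (hg : AddSubmonoid.closure (range g) = ⊤) (z : NNCharacter N) :
    z.supportSubmonoid = AddSubmonoid.closure (g '' {i | z.1 (g i) ≠ 0}) := by
  refine le_antisymm (fun m hm => ?_) (AddSubmonoid.closure_le.mpr ?_)
  · have hm' : m ∈ AddSubmonoid.closure (range g) := hg ▸ AddSubmonoid.mem_top m
    induction hm' using AddSubmonoid.closure_induction with
    | mem m hgen =>
      obtain ⟨i, rfl⟩ := hgen
      exact AddSubmonoid.subset_closure (mem_image_of_mem g hm)
    | zero => exact zero_mem _
    | add a b _ _ iha ihb =>
      have hab : z.1 a * z.1 b ≠ 0 := z.2.2 a b ▸ hm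
      exact add_mem (iha (left_ne_zero_of_mul hab)) (ihb (right_ne_zero_of_mul hab))
  · rintro _ ⟨i, hi, rfl⟩
    exact hi

theorem ext_of_closure_range_eq_top {ι : Type*} {g : ι → N}
    (hg : AddSubmonoid.closure (range g) = ⊤) {z w : NNCharacter N}
    (h : ∀ i, z.1 (g i) = w.1 (g i)) : z = w := by
  refine Subtype.ext (funext fun m => ?_)
  have hm : m ∈ AddSubmonoid.closure (range g) := hg ▸ AddSubmonoid.mem_top m
  induction hm using AddSubmonoid.closure_induction with
  | mem m hgen =>
    obtain ⟨i, rfl⟩ := hgen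
    exact h i
  | zero => rw [z.2.1, w.2.1]
  | add a b _ _ iha ihb => rw [z.2.2, w.2.2, iha, ihb]

def comp (z : NNCharacter N) (f : P →+ N) : NNCharacter P :=
  ⟨z.1 ∘ f, by simp [z.2.1], fun a b => by simp [z.2.2]⟩

theorem continuous_comp (f : P →+ N) : Continuous fun z : NNCharacter N => z.comp f :=
  continuous_induced_rng.2 <|
    continuous_pi fun m => (continuous_apply (f m)).comp continuous_subtype_val

end AddMonoid

section Finsupp

variable {ι : Type*}

noncomputable def ofFinsupp (c : ι → ℝ≥0) : NNCharacter (ι →₀ ℕ) :=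
  ⟨fun n => n.prod fun i k => c i ^ k, Finsupp.prod_zero_index,
    fun _ _ => Finsupp.prod_add_index' (fun _ => pow_zero _) fun _ => pow_add _⟩

theorem ofFinsupp_single (c : ι → ℝ≥0) (i : ι) : (ofFinsupp c).1 (Finsupp.single i 1) = c i := by
  simp [ofFinsupp, Finsupp.prod_single_index]

theorem continuous_ofFinsupp : Continuous (ofFinsupp : (ι → ℝ≥0) → NNCharacter (ι →₀ ℕ)) :=
  (continuous_pi fun _ => continuous_finsetProd _ fun i _ => (continuous_apply i).pow _).subtype_mk
    _

end Finsupp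

end NNCharacter

theorem image_neg_coe_setOf_mem {G : Type*} [InvolutiveNeg G] {s t : Set G} (hst : s ⊆ t) :
    (fun a : t => -(a : G)) '' {a | ↑a ∈ s} = -s := by
  ext x
  refine ⟨?_, fun hx => ⟨⟨-x, hst hx⟩, hx, neg_neg x⟩⟩
  rintro ⟨a, ha, rfl⟩
  simpa using ha

section FreeCone

variable {ι X : Type*} [AddCommGroup X] {v : ι → X}

def coneGen (v : ι → X) (i : ι) : AddSubmonoid.closure (range v) :=
  ⟨v i, AddSubmonoid.subset_closure (mem_range_self i)⟩

theorem closure_range_coneGen : AddSubmonoid.closure (range (coneGen v)) = ⊤ := by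
  convert AddSubmonoid.closure_closure_coe_preimage (s := range v)
  ext x
  simp [coneGen, Subtype.ext_iff, eq_comm]

theorem mem_closure_image_coneGen_iff {x : AddSubmonoid.closure (range v)} {s : Set ι} :
    x ∈ AddSubmonoid.closure (coneGen v '' s) ↔ (x : X) ∈ AddSubmonoid.closure (v '' s) := by
  rw [← AddSubmonoid.mem_map_iff_mem Subtype.val_injective (f := AddSubmonoid.subtype _),
    AddMonoidHom.map_mclosure, image_image]
  rfl

namespace LinearIndependent

theorem mem_addSubgroupClosure_image_iff (hv : LinearIndependent ℤ v) {s : Set ι} {x : X}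
    (hx : x ∈ AddSubmonoid.closure (range v)) :
    x ∈ AddSubgroup.closure (v '' s) ↔ x ∈ AddSubmonoid.closure (v '' s) := by
  refine ⟨fun hxs => ?_, fun hxs => AddSubmonoid.closure_le.mpr AddSubgroup.subset_closure hxs⟩
  -- write `x = y + w` with `y`, `w` in the cones over `s`, `sᶜ`; then `w` lies in both spans
  have hspan {t : Set ι} {y : X} (hy : y ∈ AddSubmonoid.closure (v '' t)) :
      y ∈ Submodule.span ℤ (v '' t) :=
    AddSubmonoid.closure_le.mpr Submodule.subset_span hy
  have hsplit : AddSubmonoid.closure (range v) =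
      AddSubmonoid.closure (v '' s) ⊔ AddSubmonoid.closure (v '' sᶜ) := by
    rw [← AddSubmonoid.closure_union, ← image_union, union_compl_self, image_univ]
  obtain ⟨y, hy, w, hw, rfl⟩ := AddSubmonoid.mem_sup.mp (hsplit ▸ hx)
  rw [← Submodule.span_int_eq_addSubgroupClosure, Submodule.mem_toAddSubgroup] at hxs
  have hw : w = 0 := Submodule.disjoint_def.mp (hv.disjoint_span_image disjoint_compl_right) w
    (by simpa using sub_mem hxs (hspan hy)) (hspan hw)
  rwa [hw, add_zero]

theorem apply_mem_addSubgroupClosure_image_iff (hv : LinearIndependent ℤ v) {s : Set ι} {i : ι} :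
    v i ∈ AddSubgroup.closure (v '' s) ↔ i ∈ s := by
  refine ⟨fun hi => ?_, fun hi => AddSubgroup.subset_closure (mem_image_of_mem v hi)⟩
  by_contra his
  refine hv.notMem_span_image his ?_
  rwa [← Submodule.mem_toAddSubgroup, Submodule.span_int_eq_addSubgroupClosure]

theorem forall_ne_zero_iff_mem_addSubgroupClosure_iff (hv : LinearIndependent ℤ v) {S : Set X}
    (hvS : range v ⊆ S) (hSM : ∀ α ∈ S, α ∈ AddSubmonoid.closure (range v))
    (z : NNCharacter (AddSubmonoid.closure (range v))) (s : Set ι) :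
    (∀ α (hα : α ∈ S), (z.1 ⟨α, hSM α hα⟩ ≠ 0 ↔ α ∈ AddSubgroup.closure (v '' s))) ↔
      ∀ i, z.1 (coneGen v i) ≠ 0 ↔ i ∈ s := by
  refine ⟨fun h i => ?_, fun h α hα => ?_⟩
  · rw [← hv.apply_mem_addSubgroupClosure_image_iff]
    exact h (v i) (hvS (mem_range_self i))
  · have hsupp : {i | z.1 (coneGen v i) ≠ 0} = s := Set.ext h
    rw [hv.mem_addSubgroupClosure_image_iff (hSM α hα), ← hsupp]
    exact (SetLike.ext_iff.mp (z.supportSubmonoid_eq_closure closure_range_coneGen) _).trans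
      mem_closure_image_coneGen_iff

noncomputable def coneEquiv (hv : LinearIndependent ℤ v) :
    (ι →₀ ℕ) ≃+ AddSubmonoid.closure (range v) :=
  (hv.restrict_scalars' ℕ).linearCombinationEquiv.toAddEquiv.trans
    (AddEquiv.addSubmonoidCongr (Submodule.span_nat_eq_addSubmonoidClosure _))

theorem coneEquiv_single (hv : LinearIndependent ℤ v) (i : ι) :
    hv.coneEquiv (Finsupp.single i 1) = coneGen v i :=
  Subtype.ext <| show Finsupp.linearCombination ℕ v (Finsupp.single i 1) = v i by simp

noncomputable def coneLift (hv : LinearIndependent ℤ v) (c : ι → ℝ≥0) :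
    NNCharacter (AddSubmonoid.closure (range v)) :=
  (NNCharacter.ofFinsupp c).comp hv.coneEquiv.symm

theorem coneLift_coneGen (hv : LinearIndependent ℤ v) (c : ι → ℝ≥0) (i : ι) :
    (hv.coneLift c).1 (coneGen v i) = c i := by
  simp [coneLift, NNCharacter.comp, ← coneEquiv_single hv, NNCharacter.ofFinsupp_single]

theorem continuous_coneLift (hv : LinearIndependent ℤ v) : Continuous hv.coneLift :=
  (NNCharacter.continuous_comp _).comp NNCharacter.continuous_ofFinsupp

theorem coneLift_apply_coneGen (hv : LinearIndependent ℤ v)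
    (z : NNCharacter (AddSubmonoid.closure (range v))) :
    hv.coneLift (fun i => z.1 (coneGen v i)) = z :=
  NNCharacter.ext_of_closure_range_eq_top closure_range_coneGen (hv.coneLift_coneGen _)

theorem closure_setOf_support_eq (hv : LinearIndependent ℤ v) (t : Set ι) :
    closure {z : NNCharacter (AddSubmonoid.closure (range v)) |
        ∀ i, z.1 (coneGen v i) ≠ 0 ↔ i ∈ t} =
      {z | ∀ i ∉ t, z.1 (coneGen v i) = 0} := by
  refine subset_antisymm (closure_minimal ?_ ?_) fun z hz => ?_
  · intro z hz i hi
    by_contra h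
    exact hi ((hz i).1 h)
  · simp only [ofPred_forall]
    exact isClosed_iInter fun i => isClosed_iInter fun _ =>
      isClosed_eq ((continuous_apply _).comp continuous_subtype_val) continuous_const
  · let c : ℝ≥0 → ι → ℝ≥0 := fun u i => z.1 (coneGen v i) + u * t.indicator 1 i
    have hc : Continuous c :=
      continuous_pi fun i => continuous_const.add (continuous_id.mul continuous_const)
    have hc0 : hv.coneLift (c 0) = z := by simpa [c] using hv.coneLift_apply_coneGen z
    have hcZ : ∀ u ∈ Ioi (0 : ℝ≥0), hv.coneLift (c u) ∈ {z : NNCharacter _ |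
        ∀ i, z.1 (coneGen v i) ≠ 0 ↔ i ∈ t} := by
      intro u (hu : 0 < u) i
      rw [hv.coneLift_coneGen]
      by_cases hi : i ∈ t
      · simp [c, hi, hu.ne']
      · simp [c, hi, hz i hi]
    have hlim := ((hv.continuous_coneLift.comp hc).tendsto 0).mono_left
      (nhdsWithin_le_nhds (s := Ioi 0))
    rw [Function.comp_apply, hc0] at hlim
    exact mem_closure_of_tendsto hlim (eventually_nhdsWithin_of_forall hcZ)

end LinearIndependent

end FreeCone

/-- closure of strata. In `Λ̄ = Hom_Mon(⟨Φ⁻⟩, ℝ_{≥0})` with the topology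
of pointwise convergence, let `Z(σ)` be the stratum of those z with `z(α) ≠ 0` iff
`α ∈ Φ⁻ ∩ ℤ-span(σ)`. Then for τ ⊆ Δ, the topological closure of `Z(τ)` equals the
union of the `Z(τ')` over all τ' ⊆ τ. -/
theorem stmt16 (X : Type*) [AddCommGroup X]
    (Δ : Finset X) (hind : LinearIndependent ℤ (fun a : (Δ : Set X) => (a : X)))
    (Φminus : Set X)
    (hΔΦ : (fun a => -a) '' (Δ : Set X) ⊆ Φminus)
    (hΦ : Φminus ⊆ (AddSubmonoid.closure ((fun a => -a) '' (Δ : Set X)) : Set X))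
    (M : AddSubmonoid X) (hM : M = AddSubmonoid.closure Φminus)
    (hmem : ∀ α ∈ Φminus, α ∈ M)
    (τ : Finset X) (hτ : τ ⊆ Δ)
    (Z : Finset X →
      Set {z : ↥M → ℝ≥0 // z 0 = 1 ∧ ∀ a b : ↥M, z (a + b) = z a * z b})
    (hZ : ∀ σ : Finset X, Z σ = {z | ∀ α, ∀ hα : α ∈ Φminus,
        (z.1 ⟨α, hmem α hα⟩ ≠ 0 ↔ α ∈ AddSubgroup.closure (σ : Set X))}) :
    closure (Z τ) = ⋃ σ ∈ {σ : Finset X | σ ⊆ τ}, Z σ := by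
  classical
  set v : ↥(Δ : Set X) → X := fun a => -(a : X)
  have hv : LinearIndependent ℤ v := hind.neg
  have hrange : range v = (fun a => -a) '' (Δ : Set X) := (image_eq_range _ _).symm
  have hMv : M = AddSubmonoid.closure (range v) := by
    rw [hM, hrange]
    exact le_antisymm (AddSubmonoid.closure_le.mpr hΦ) (AddSubmonoid.closure_mono hΔΦ)
  subst hMv
  have hZσ (σ : Finset X) (hσ : σ ⊆ Δ) :
      Z σ = {z | ∀ i : ↥(Δ : Set X), z.1 (coneGen v i) ≠ 0 ↔ ↑i ∈ σ} := by
    rw [hZ σ, ← AddSubgroup.closure_neg, ← image_neg_coe_setOf_mem (Finset.coe_subset.mpr hσ)]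
    ext z
    exact hv.forall_ne_zero_iff_mem_addSubgroupClosure_iff (hrange ▸ hΔΦ) hmem z _
  rw [hZσ τ hτ]
  refine (hv.closure_setOf_support_eq {i | ↑i ∈ τ}).trans ?_
  ext z
  simp only [mem_iUnion, mem_ofPred_eq, exists_prop]
  refine ⟨fun hz => ⟨{a ∈ τ | ∀ h : a ∈ Δ, z.1 (coneGen v ⟨a, h⟩) ≠ 0},
    Finset.filter_subset _ _, ?_⟩, ?_⟩
  · rw [hZσ _ ((Finset.filter_subset _ _).trans hτ)]
    intro i
    simpa using not_imp_comm.mp (hz i)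
  · rintro ⟨σ, hστ, hz⟩ i hi
    rw [hZσ σ (hστ.trans hτ)] at hz
    by_contra h
    exact hi (hστ ((hz i).1 h))
end
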